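/- For all spanoids S₁ on a finite set X₁ and S₂ on a finite set X₂: f-rank(S₁ ⋉ S₂) ≤ f-rank(S₁) · f-rank(S₂), where ⋉ denotes the semi-direct product of spanoids. -/
import Mathlib


open scoped BigOperators

/-- A spanoid on ground set `X`: a set of inference rules `(A, i)`,
read as "`A` spans `i`". -/
abbrev SpanoidOn (X : Type) : Type := Set (Set X × X)

/-- The span of `T`: the smallest superset `T'` of `T` such that whenever `(A, i)` is a
rule with `A ⊆ T'`, also `i ∈ T'`. -/
def sSpan {X : Type} (S : SpanoidOn X) (T : Set X) : Set X :=
  ⋂₀ {T' : Set X | T ⊆ T' ∧ ∀ p ∈ S, p.1 ⊆ T' → p.2 ∈ T'}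

/-- The rank of a spanoid: the minimum size of a subset spanning the whole ground set. -/
noncomputable def sRank {X : Type} [Fintype X] (S : SpanoidOn X) : ℕ :=
  sInf {k : ℕ | ∃ T : Set X, T.ncard = k ∧ sSpan S T = Set.univ}

/-- A set is closed if it equals its own span. -/
def sClosed {X : Type} (S : SpanoidOn X) (B : Set X) : Prop := sSpan S B = B

/-- A set is open if its complement is closed. -/
def sOpen {X : Type} (S : SpanoidOn X) (B : Set X) : Prop := sClosed S Bᶜ

/-- A code `C ⊆ K^X` is consistent with the spanoid `S` if for every rule `(A, i)` of `S`
there is a function `g` with `c i = g (c|_A)` for all codewords `c ∈ C`. -/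
def sConsistent {X K : Type} (S : SpanoidOn X) (C : Set (X → K)) : Prop :=
  ∀ p ∈ S, ∃ g : (↥p.1 → K) → K, ∀ c ∈ C, c p.2 = g (fun a => c a.1)

/-- The functional rank of a spanoid: the supremum of `log |C| / log |Σ|` over all finite
alphabets `Σ` (of size at least 2) and all codes `C ⊆ Σ^X` consistent with `S`. -/
noncomputable def sFrank {X : Type} (S : SpanoidOn X) : ℝ :=
  sSup {d : ℝ | ∃ m : ℕ, 2 ≤ m ∧ ∃ C : Set (X → Fin m),
    sConsistent S C ∧ d = Real.log (Nat.card C) / Real.log m}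

/-- Feasibility for the entropy linear program of a spanoid. -/
def sEntFeasible {X : Type} (S : SpanoidOn X) (f : Set X → ℝ) : Prop :=
  f ∅ = 0 ∧ (∀ i : X, f {i} ≤ 1) ∧
  (∀ A B : Set X, f (A ∪ B) + f (A ∩ B) ≤ f A + f B) ∧
  (∀ A B : Set X, A ⊆ B → f A ≤ f B) ∧
  (∀ A : Set X, ∀ i ∈ sSpan S A, f (A ∪ {i}) = f A)

/-- The optimum of the entropy linear program: maximize `f(X)` over feasible `f`. -/
noncomputable def sLPentropy {X : Type} (S : SpanoidOn X) : ℝ :=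
  sSup {y : ℝ | ∃ f : Set X → ℝ, sEntFeasible S f ∧ y = f Set.univ}

/-- The optimum of the covering linear program: minimize `∑ i, x i` over `x ≥ 0` such that
`∑_{i ∈ B} x i ≥ 1` for every nonempty open set `B`. -/
noncomputable def sLPcover {X : Type} [Fintype X] (S : SpanoidOn X) : ℝ :=
  sInf {y : ℝ | ∃ x : X → ℝ, (∀ i, 0 ≤ x i) ∧
    (∀ B : Set X, B.Nonempty → sOpen S B → 1 ≤ ∑ i, B.indicator x i) ∧
    y = ∑ i, x i}

/-- A spanoid on `[n]` is a `q`-LCS with error-tolerance `δ` if every `i` is spanned by at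
least `δ n` pairwise disjoint `q`-element subsets. -/
def sIsLCS {n : ℕ} (q : ℕ) (δ : ℝ) (S : SpanoidOn (Fin n)) : Prop :=
  ∀ i : Fin n, ∃ M : Finset (Finset (Fin n)),
    δ * n ≤ (M.card : ℝ) ∧
    (∀ A ∈ M, A.card = q) ∧
    ((M : Set (Finset (Fin n))).Pairwise fun A B => Disjoint A B) ∧
    ∀ A ∈ M, ((A : Set (Fin n)), i) ∈ S

/-- The semi-direct product `S₁ ⋉ S₂` on `X₁ × X₂`: whenever `A ⊨ i` in `S₁` and `j ∈ X₂`,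
the rule `(A × X₂, (i,j))`; and whenever `B ⊨ j` in `S₂` and `i ∈ X₁`, the rule
`({i} × B, (i,j))`. -/
def semidirect {X₁ X₂ : Type} (S₁ : SpanoidOn X₁) (S₂ : SpanoidOn X₂) :
    SpanoidOn (X₁ × X₂) :=
  {p | (∃ (A : Set X₁) (i : X₁) (j : X₂), i ∈ sSpan S₁ A ∧
          p = (A ×ˢ (Set.univ : Set X₂), (i, j))) ∨
       (∃ (B : Set X₂) (i : X₁) (j : X₂), j ∈ sSpan S₂ B ∧
          p = (({i} : Set X₁) ×ˢ B, (i, j)))}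

lemma subset_sSpan {X : Type} (S : SpanoidOn X) (T : Set X) : T ⊆ sSpan S T := by
  intro x hx
  exact Set.mem_sInter.2 fun T' hT' => hT'.1 hx

lemma sSpan_rule {X : Type} (S : SpanoidOn X) (T : Set X) {p : Set X × X}
    (hp : p ∈ S) (h : p.1 ⊆ sSpan S T) : p.2 ∈ sSpan S T := by
  refine Set.mem_sInter.2 fun T' hT' => ?_
  exact hT'.2 p hp (h.trans (Set.sInter_subset_of_mem hT'))

/-- The defining set of `sFrank`. -/
def frankSet {X : Type} (S : SpanoidOn X) : Set ℝ :=
  {d : ℝ | ∃ m : ℕ, 2 ≤ m ∧ ∃ C : Set (X → Fin m),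
    sConsistent S C ∧ d = Real.log (Nat.card C) / Real.log m}

lemma sFrank_eq_sSup {X : Type} (S : SpanoidOn X) : sFrank S = sSup (frankSet S) := rfl

lemma zero_mem_frankSet {X : Type} (S : SpanoidOn X) : (0 : ℝ) ∈ frankSet S := by
  refine ⟨2, le_refl 2, ∅, fun p _ => ⟨fun _ => 0, fun c hc => absurd hc (Set.notMem_empty c)⟩, ?_⟩
  simp

lemma frankSet_bddAbove {X : Type} [Fintype X] (S : SpanoidOn X) :
    BddAbove (frankSet S) := by
  refine ⟨Fintype.card X, fun d hd => ?_⟩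
  obtain ⟨m, hm, C, hC, rfl⟩ := hd
  have hm1 : (1 : ℝ) < m := by exact_mod_cast hm
  have hlogm : 0 < Real.log m := Real.log_pos hm1
  rw [div_le_iff₀ hlogm]
  have hcard : (Nat.card C : ℝ) ≤ (m : ℝ) ^ Fintype.card X := by
    have h1 : Nat.card C ≤ Nat.card (X → Fin m) := Nat.card_le_card_of_injective _ Subtype.val_injective
    have h2 : Nat.card (X → Fin m) = m ^ Fintype.card X := by
      classical
      rw [Nat.card_eq_fintype_card, Fintype.card_fun, Fintype.card_fin]
    rw [h2] at h1
    exact_mod_cast h1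
  rcases Nat.eq_zero_or_pos (Nat.card C) with h0 | hpos
  · rw [h0]
    simp only [Nat.cast_zero, Real.log_zero]
    positivity
  · calc Real.log (Nat.card C) ≤ Real.log ((m : ℝ) ^ Fintype.card X) := by
          apply Real.log_le_log (by exact_mod_cast hpos) hcard
      _ = Fintype.card X * Real.log m := by rw [Real.log_pow]
lemma le_sFrank {X : Type} [Fintype X] (S : SpanoidOn X) {d : ℝ} (hd : d ∈ frankSet S) :
    d ≤ sFrank S := le_csSup (frankSet_bddAbove S) hd

lemma sFrank_nonneg {X : Type} [Fintype X] (S : SpanoidOn X) : 0 ≤ sFrank S :=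
  le_sFrank S (zero_mem_frankSet S)

/-- The `i`-th block of a function on a product ground set. -/
def blk {X₁ X₂ K : Type} (i : X₁) (c : X₁ × X₂ → K) : X₂ → K := fun j => c (i, j)

/-- The `i`-th block marginal of a code. -/
def blkSet {X₁ X₂ K : Type} (C : Set (X₁ × X₂ → K)) (i : X₁) : Set (X₂ → K) :=
  blk i '' C

lemma blkSet_consistent {X₁ X₂ K : Type} (S₁ : SpanoidOn X₁) (S₂ : SpanoidOn X₂)
    {C : Set (X₁ × X₂ → K)} (hC : sConsistent (semidirect S₁ S₂) C) (i : X₁) :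
    sConsistent S₂ (blkSet C i) := by
  intro p hp
  have hrule : ((({i} : Set X₁) ×ˢ p.1, (i, p.2)) : Set (X₁ × X₂) × (X₁ × X₂))
      ∈ semidirect S₁ S₂ :=
    Or.inr ⟨p.1, i, p.2, sSpan_rule S₂ p.1 hp (subset_sSpan S₂ p.1), rfl⟩
  obtain ⟨g, hg⟩ := hC _ hrule
  refine ⟨fun h => g (fun a => h ⟨a.1.2, a.2.2⟩), ?_⟩
  rintro e ⟨c, hcC, rfl⟩
  have h1 := hg c hcC
  show c (i, p.2) = g _
  rw [h1]
  congr 1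
  funext a
  show c a.1 = c (i, a.1.2)
  have ha : a.1 = (i, a.1.2) := Prod.ext a.2.1 rfl
  rw [← ha]
lemma key_bound {X₁ X₂ : Type} [Fintype X₁] [Fintype X₂]
    (S₁ : SpanoidOn X₁) (S₂ : SpanoidOn X₂) {m : ℕ} (hm : 2 ≤ m)
    (C : Set (X₁ × X₂ → Fin m)) (hC : sConsistent (semidirect S₁ S₂) C) :
    Real.log (Nat.card C) ≤ sFrank S₁ * sFrank S₂ * Real.log m := by
  have hm0 : (0 : ℝ) < m := by positivity
  have hm1 : (1 : ℝ) < m := by exact_mod_cast hm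
  have hlogm : 0 < Real.log m := Real.log_pos hm1
  have hd1 : 0 ≤ sFrank S₁ := sFrank_nonneg S₁
  have hd2 : 0 ≤ sFrank S₂ := sFrank_nonneg S₂
  rcases le_or_gt (Nat.card C) 1 with hsmall | hbig
  · have h0 : Real.log (Nat.card C) ≤ 0 := by
      apply Real.log_nonpos (by positivity)
      exact_mod_cast hsmall
    calc Real.log (Nat.card C) ≤ 0 := h0
      _ ≤ _ := by positivity
  -- big case : at least two codewords
  have hfin : ∀ i : X₁, (blkSet C i).Finite := fun i => Set.toFinite _
  have hntC : Nontrivial ↥C := Finite.one_lt_card_iff_nontrivial.1 hbig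
  obtain ⟨c₀, c₀', hne⟩ := hntC
  have hne' : (c₀ : X₁ × X₂ → Fin m) ≠ (c₀' : X₁ × X₂ → Fin m) :=
    fun h => hne (Subtype.ext h)
  obtain ⟨⟨i₀, j₀⟩, hij⟩ := Function.ne_iff.1 hne'
  have hCne : C.Nonempty := ⟨c₀, c₀.2⟩
  -- each block marginal is nonempty
  have hbne : ∀ i : X₁, (blkSet C i).Nonempty := fun i => hCne.image _
  have hbneS : ∀ i : X₁, Nonempty ↥(blkSet C i) := fun i => (hbne i).to_subtype
  -- each block marginal is bounded by m ^ sFrank S₂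
  have hblk : ∀ i : X₁, (Nat.card ↥(blkSet C i) : ℝ) ≤ (m : ℝ) ^ (sFrank S₂) := by
    intro i
    have hpos : 0 < Nat.card ↥(blkSet C i) := Nat.card_pos
    have hmem : Real.log (Nat.card ↥(blkSet C i)) / Real.log m ∈ frankSet S₂ :=
      ⟨m, hm, blkSet C i, blkSet_consistent S₁ S₂ hC i, rfl⟩
    have hle := le_sFrank S₂ hmem
    rw [div_le_iff₀ hlogm] at hle
    rw [← Real.log_rpow hm0 (sFrank S₂)] at hle
    have := Real.rpow_pos_of_pos hm0 (sFrank S₂)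
    rw [Real.log_le_log_iff (by exact_mod_cast hpos) this] at hle
    exact hle
  -- the common block alphabet size
  set F : X₁ → ℕ := fun i => Nat.card ↥(blkSet C i) with hF
  set M : ℕ := Finset.univ.sup F with hMdef
  have hFM : ∀ i : X₁, F i ≤ M := fun i => Finset.le_sup (Finset.mem_univ i)
  have hM2 : 2 ≤ M := by
    refine le_trans ?_ (hFM i₀)
    have h1 : blk i₀ (c₀ : X₁ × X₂ → Fin m) ∈ blkSet C i₀ := ⟨c₀.1, c₀.2, rfl⟩
    have h2 : blk i₀ (c₀' : X₁ × X₂ → Fin m) ∈ blkSet C i₀ := ⟨c₀'.1, c₀'.2, rfl⟩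
    have hne2 : blk i₀ (c₀ : X₁ × X₂ → Fin m) ≠ blk i₀ (c₀' : X₁ × X₂ → Fin m) := by
      intro h
      exact hij (congrFun h j₀)
    have : Nontrivial ↥(blkSet C i₀) := ⟨⟨_, h1⟩, ⟨_, h2⟩, fun h => hne2 (congrArg Subtype.val h)⟩
    exact Finite.one_lt_card_iff_nontrivial.2 this
  have hM0 : (0 : ℝ) < M := by positivity
  -- M is attained, hence bounded by m ^ sFrank S₂
  obtain ⟨iStar, _, hiStar⟩ := Finset.exists_mem_eq_sup Finset.univ
    ⟨i₀, Finset.mem_univ i₀⟩ F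
  have hMle : (M : ℝ) ≤ (m : ℝ) ^ (sFrank S₂) := by
    rw [hMdef, hiStar]; exact hblk iStar
  -- build the embeddings of block marginals into Fin M
  have hemb : ∀ i : X₁, ∃ e : ↥(blkSet C i) → Fin M, Function.Injective e := by
    intro i
    haveI : Fintype ↥(blkSet C i) := Fintype.ofFinite _
    have hle : Fintype.card ↥(blkSet C i) ≤ M := by
      rw [← Nat.card_eq_fintype_card]; exact hFM i
    exact ⟨fun x => Fin.castLE hle ((Fintype.equivFin _) x),
      (Fin.castLE_injective hle).comp (Equiv.injective _)⟩
  choose e he using hemb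
  -- decoders
  set dec : (i : X₁) → Fin M → (X₂ → Fin m) :=
    fun i v => ((Function.invFun (e i)) v).1 with hdec
  have hdec_e : ∀ (i : X₁) (x : ↥(blkSet C i)), dec i (e i x) = x.1 := fun i x =>
    congrArg Subtype.val (Function.leftInverse_invFun (he i) x)
  -- the product-to-block encoding
  set φ : ↥C → (X₁ → Fin M) := fun c i => e i ⟨blk i c.1, ⟨c.1, c.2, rfl⟩⟩ with hφ
  have hφinj : Function.Injective φ := by
    intro c c' h
    apply Subtype.ext
    funext x
    have h1 := congrFun h x.1
    have h2 := he x.1 h1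
    have h3 : blk x.1 c.1 = blk x.1 c'.1 := congrArg Subtype.val h2
    have := congrFun h3 x.2
    simpa [blk] using this
  set C' : Set (X₁ → Fin M) := Set.range φ with hC'def
  have hcard' : Nat.card ↥C' = Nat.card ↥C := Nat.card_range_of_injective hφinj
  -- C' is consistent with S₁
  have hC'cons : sConsistent S₁ C' := by
    classical
    intro p hp
    have hi : p.2 ∈ sSpan S₁ p.1 := sSpan_rule S₁ p.1 hp (subset_sSpan S₁ p.1)
    have hg : ∀ j : X₂, ∃ g : (↥(p.1 ×ˢ (Set.univ : Set X₂)) → Fin m) → Fin m,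
        ∀ c ∈ C, c (p.2, j) = g (fun a => c a.1) := fun j =>
      hC _ (Or.inl ⟨p.1, p.2, j, hi, rfl⟩)
    choose g hgspec using hg
    refine ⟨fun h => if hmem : (fun j => g j (fun a =>
        dec a.1.1 (h ⟨a.1.1, a.2.1⟩) a.1.2)) ∈ blkSet C p.2
      then e p.2 ⟨_, hmem⟩ else (e p.2 ⟨(hbne p.2).choose, (hbne p.2).choose_spec⟩), ?_⟩
    rintro c' ⟨c, rfl⟩
    have harg : ∀ a : X₁, dec a (φ c a) = blk a c.1 := fun a =>
      hdec_e a ⟨blk a c.1, ⟨c.1, c.2, rfl⟩⟩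
    have hkey : (fun j => g j (fun a : ↥(p.1 ×ˢ (Set.univ : Set X₂)) =>
        dec a.1.1 ((fun b : ↥p.1 => φ c b.1) ⟨a.1.1, a.2.1⟩) a.1.2)) = blk p.2 c.1 := by
      funext j
      have h1 : (fun a : ↥(p.1 ×ˢ (Set.univ : Set X₂)) =>
          dec a.1.1 ((fun b : ↥p.1 => φ c b.1) ⟨a.1.1, a.2.1⟩) a.1.2) =
          (fun a : ↥(p.1 ×ˢ (Set.univ : Set X₂)) => c.1 a.1) := by
        funext a
        show dec a.1.1 (φ c a.1.1) a.1.2 = c.1 a.1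
        rw [harg a.1.1]
        show c.1 (a.1.1, a.1.2) = c.1 a.1
        rw [Prod.mk.eta]
      rw [h1]
      exact (hgspec j c.1 c.2).symm
    have hmem2 : (fun j => g j (fun a : ↥(p.1 ×ˢ (Set.univ : Set X₂)) =>
        dec a.1.1 ((fun b : ↥p.1 => φ c b.1) ⟨a.1.1, a.2.1⟩) a.1.2)) ∈ blkSet C p.2 := by
      rw [hkey]; exact ⟨c.1, c.2, rfl⟩
    show φ c p.2 = if hmem : (fun j => g j (fun a : ↥(p.1 ×ˢ (Set.univ : Set X₂)) =>
        dec a.1.1 ((fun b : ↥p.1 => φ c b.1) ⟨a.1.1, a.2.1⟩) a.1.2)) ∈ blkSet C p.2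
      then e p.2 ⟨_, hmem⟩ else (e p.2 ⟨(hbne p.2).choose, (hbne p.2).choose_spec⟩)
    rw [dif_pos hmem2]
    show e p.2 ⟨blk p.2 c.1, ⟨c.1, c.2, rfl⟩⟩ = _
    exact congrArg (e p.2) (Subtype.ext hkey.symm)
  -- conclude
  have hmem' : Real.log (Nat.card ↥C') / Real.log M ∈ frankSet S₁ :=
    ⟨M, hM2, C', hC'cons, rfl⟩
  have hle' := le_sFrank S₁ hmem'
  have hlogM : 0 < Real.log M := Real.log_pos (by exact_mod_cast hM2)
  rw [div_le_iff₀ hlogM, hcard'] at hle'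
  have hlogMle : Real.log M ≤ sFrank S₂ * Real.log m := by
    rw [← Real.log_rpow hm0 (sFrank S₂)]
    exact Real.log_le_log hM0 hMle
  calc Real.log (Nat.card ↥C) ≤ sFrank S₁ * Real.log M := hle'
    _ ≤ sFrank S₁ * (sFrank S₂ * Real.log m) := by
        exact mul_le_mul_of_nonneg_left hlogMle hd1
    _ = sFrank S₁ * sFrank S₂ * Real.log m := by ring

/-- functional rank is sub-multiplicative under semi-direct product. -/
theorem frank_semidirect_le {X₁ X₂ : Type} [Fintype X₁] [Fintype X₂]
    (S₁ : SpanoidOn X₁) (S₂ : SpanoidOn X₂) :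
    sFrank (semidirect S₁ S₂) ≤ sFrank S₁ * sFrank S₂ := by
  have hd1 : 0 ≤ sFrank S₁ := sFrank_nonneg S₁
  have hd2 : 0 ≤ sFrank S₂ := sFrank_nonneg S₂
  rw [sFrank_eq_sSup]
  refine Real.sSup_le ?_ (mul_nonneg hd1 hd2)
  rintro d ⟨m, hm, C, hC, rfl⟩
  have hm1 : (1 : ℝ) < m := by exact_mod_cast hm
  have hlogm : 0 < Real.log m := Real.log_pos hm1
  rw [div_le_iff₀ hlogm]
  exact key_bound S₁ S₂ hm C hC
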